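/- arXiv:1909.08221 — 3 statements merged into one kernel-verified Lean document; each statement's English description precedes it below -/
import Mathlib

section
/- Let f : Ω → ℝ^m be a K-quasiregular ω-curve, where Ω ⊂ ℝ^n is a domain, n ≤ m, ω is a simple n-volume form on ℝ^m, ε > 0, and K' > K. Then for each x ∈ Ω there exist a neighborhood D ⋐ Ω of x, an isometry L : ℝ^m → ℝ^m, a K'-quasiregular map f̂ : D → ℝ^n, and a continuous Sobolev map h ∈ W^{1,n}(D,ℝ^{m−n}) such that L∘f|_D = (f̂, h) : D → ℝ^n × ℝ^{m−n} and (⋆f^*ω)/((1+ε)K') ≤ ‖ω_{f(x)}‖ J_{f̂} ≤ (1+ε)K(⋆f^*ω) almost everywhere in D, where J_{f̂} is the Jacobian determinant of f̂. -/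
open MeasureTheory Filter Topology

noncomputable section

namespace QRC

/-- Euclidean `n`-space `ℝⁿ`. -/
abbrev E (n : ℕ) : Type := EuclideanSpace ℝ (Fin n)

/-- A (rough) differential `k`-form on `ℝᵐ`: a field of continuous `k`-linear maps.
The alternating property is required separately (see `IsAlternatingForm`). -/
abbrev Form (k m : ℕ) : Type :=
  E m → ContinuousMultilinearMap ℝ (fun _ : Fin k => E m) ℝ

/-- The field of multilinear maps is pointwise alternating, i.e. is a genuine differential form. -/
def IsAlternatingForm {k m : ℕ} (ω : Form k m) : Prop :=
  ∀ x (v : Fin k → E m) (i j : Fin k), v i = v j → i ≠ j → ω x v = 0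

/-- The exterior derivative of a `k`-form, evaluated at `x` on `k+1` vectors. -/
def extDeriv {m k : ℕ} (τ : Form k m) (x : E m) (v : Fin (k + 1) → E m) : ℝ :=
  ∑ i : Fin (k + 1), (-1 : ℝ) ^ (i : ℕ) * fderiv ℝ τ x (v i) (fun j => v (i.succAbove j))

/-- An `n`-volume form on `ℝᵐ`: a smooth, closed, non-vanishing differential `n`-form. -/
def IsVolForm (n m : ℕ) (ω : Form n m) : Prop :=
  IsAlternatingForm ω ∧ ContDiff ℝ (⊤ : ℕ∞) ω ∧ (∀ x v, extDeriv ω x v = 0) ∧ ∀ x, ω x ≠ 0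

/-- The `i`-th standard basis vector of `ℝⁿ`. -/
def stdb {n : ℕ} (i : Fin n) : E n := EuclideanSpace.single i 1

/-- `⋆(A^*α)`: the Hodge star (coefficient w.r.t. `dx₁ ∧ ⋯ ∧ dxₙ`) of the pullback of the
`n`-covector `α` on `ℝᵐ` under the linear map `A : ℝⁿ → ℝᵐ`, i.e. the evaluation of `α` on the
images of the standard (positively oriented, orthonormal) basis of `ℝⁿ`. -/
def hodgePair {n m : ℕ} (α : ContinuousMultilinearMap ℝ (fun _ : Fin n => E m) ℝ)
    (A : E n →L[ℝ] E m) : ℝ :=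
  α fun i => A (stdb i)

/-- The norm `‖⋀ⁿ A‖` of the induced map on `n`-th exterior powers of a linear map
`A : ℝⁿ → ℝᵐ`, computed as the Gram determinant of the images of an orthonormal basis. -/
def extNorm {n m : ℕ} (A : E n →L[ℝ] E m) : ℝ :=
  Real.sqrt ((Matrix.of fun i j : Fin n => (inner ℝ (A (stdb i)) (A (stdb j)) : ℝ)).det)

/-- The determinant of a continuous linear self-map of `ℝⁿ`. -/
def clmDet {n : ℕ} (A : E n →L[ℝ] E n) : ℝ := LinearMap.det (A : E n →ₗ[ℝ] E n)

variable {X F : Type*}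

/-- `f'` is a weak (distributional) derivative of `f` on the open set `Ω`, and both are
locally integrable on `Ω`. -/
def IsWeakDerivOn [NormedAddCommGroup X] [NormedSpace ℝ X] [MeasureSpace X]
    [NormedAddCommGroup F] [NormedSpace ℝ F]
    (Ω : Set X) (f : X → F) (f' : X → X →L[ℝ] F) : Prop :=
  LocallyIntegrableOn f Ω volume ∧ LocallyIntegrableOn f' Ω volume ∧
    ∀ φ : X → ℝ, ContDiff ℝ (⊤ : ℕ∞) φ → HasCompactSupport φ → tsupport φ ⊆ Ω →
      ∀ v : X, (∫ x in Ω, fderiv ℝ φ x v • f x) = -∫ x in Ω, φ x • f' x v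

/-- `f` belongs to the local Sobolev space `W^{1,p}_loc(Ω, F)`, with weak derivative `f'`. -/
def MemW1pLocOn [NormedAddCommGroup X] [NormedSpace ℝ X] [MeasureSpace X]
    [NormedAddCommGroup F] [NormedSpace ℝ F]
    (p : ℝ) (Ω : Set X) (f : X → F) (f' : X → X →L[ℝ] F) : Prop :=
  IsWeakDerivOn Ω f f' ∧
    ∀ C : Set X, C ⊆ Ω → IsCompact C → IntegrableOn (fun x => ‖f' x‖ ^ p) C volume

/-- `f` belongs to the (global) Sobolev space `W^{1,p}(Ω, F)`, with weak derivative `f'`. -/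
def MemW1pOn [NormedAddCommGroup X] [NormedSpace ℝ X] [MeasureSpace X]
    [NormedAddCommGroup F] [NormedSpace ℝ F]
    (p : ℝ) (Ω : Set X) (f : X → F) (f' : X → X →L[ℝ] F) : Prop :=
  IsWeakDerivOn Ω f f' ∧ IntegrableOn (fun x => ‖f' x‖ ^ p) Ω volume

/-- `f : Ω → ℝᵐ` is a `K`-quasiregular `ω`-curve with (given) weak derivative `f'`:
`f` is continuous, lies in `W^{1,n}_loc(Ω,ℝᵐ)` and satisfies the distortion inequality
`(‖ω‖ ∘ f) ‖Df‖ⁿ ≤ K ⋆f^*ω` a.e. in `Ω`.  Here `‖ω (f x)‖` is the comass of the `n`-covector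
`ω (f x)` (the operator norm of an alternating multilinear map is its comass). -/
def IsQRCurveOnD {n m : ℕ} (K : ℝ) (ω : Form n m) (Ω : Set (E n))
    (f : E n → E m) (f' : E n → E n →L[ℝ] E m) : Prop :=
  1 ≤ K ∧ ContinuousOn f Ω ∧ MemW1pLocOn (n : ℝ) Ω f f' ∧
    ∀ᵐ x ∂volume.restrict Ω, ‖ω (f x)‖ * ‖f' x‖ ^ (n : ℕ) ≤ K * hodgePair (ω (f x)) (f' x)

/-- `f : Ω → ℝᵐ` is a `K`-quasiregular `ω`-curve (for some choice of weak derivative). -/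
def IsQRCurveOn {n m : ℕ} (K : ℝ) (ω : Form n m) (Ω : Set (E n)) (f : E n → E m) : Prop :=
  ∃ f', IsQRCurveOnD K ω Ω f f'

/-- `g : Ω → ℝⁿ` is a `K`-quasiregular map with (given) weak derivative `g'`. -/
def IsQRMapOnD {n : ℕ} (K : ℝ) (Ω : Set (E n)) (g : E n → E n)
    (g' : E n → E n →L[ℝ] E n) : Prop :=
  1 ≤ K ∧ ContinuousOn g Ω ∧ MemW1pLocOn (n : ℝ) Ω g g' ∧
    ∀ᵐ x ∂volume.restrict Ω, ‖g' x‖ ^ (n : ℕ) ≤ K * clmDet (g' x)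

/-- A differential `n`-form on `ℝᵐ` is simple (decomposable) if it is the wedge product
`ω = ω₁ ∧ ⋯ ∧ ωₙ` of `n` smooth `1`-forms, i.e. pointwise
`ω x (v₁,…,vₙ) = det (ωᵢ(x)(vⱼ))ᵢⱼ`. -/
def IsSimpleForm {n m : ℕ} (ω : Form n m) : Prop :=
  ∃ θ : Fin n → E m → (E m →L[ℝ] ℝ), (∀ i, ContDiff ℝ (⊤ : ℕ∞) (θ i)) ∧
    ∀ x v, ω x v = (Matrix.of fun i j : Fin n => θ i x (v j)).det

/-- `D` is compactly contained in `Ω` and open. -/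
def CptContained {α : Type*} [TopologicalSpace α] (D Ω : Set α) : Prop :=
  IsOpen D ∧ IsCompact (closure D) ∧ closure D ⊆ Ω

/-- `f` is a discrete map on `Ω`: every fiber of `f|_Ω` is a discrete subset of `Ω`. -/
def IsDiscreteMapOn {α β : Type*} [TopologicalSpace α] (Ω : Set α) (f : α → β) : Prop :=
  ∀ y : β, ∀ x ∈ Ω, f x = y → ∃ U, IsOpen U ∧ x ∈ U ∧ ∀ z ∈ U ∩ Ω, f z = y → z = x

/-- `f` is non-constant on `Ω`. -/
def NonConstantOn {α β : Type*} (Ω : Set α) (f : α → β) : Prop :=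
  ¬ ∃ c, ∀ x ∈ Ω, f x = c


section Helpers
open RealInnerProductSpace

lemma norm_stdb {n : ℕ} (i : Fin n) : ‖(stdb i : E n)‖ = 1 := by
  rw [stdb, EuclideanSpace.norm_single, norm_one]

def coordFun {k m : ℕ} (σ : Fin k ↪ Fin m) (v : E m) : E k :=
  (WithLp.equiv 2 (Fin k → ℝ)).symm (fun i => v (σ i))

lemma coord_norm_le {k m : ℕ} (σ : Fin k ↪ Fin m) (v : E m) :
    ‖coordFun σ v‖ ≤ ‖v‖ := by
  rw [EuclideanSpace.norm_eq, EuclideanSpace.norm_eq]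
  apply Real.sqrt_le_sqrt
  calc ∑ i : Fin k, ‖coordFun σ v i‖ ^ 2 = ∑ j ∈ Finset.univ.map σ, ‖v j‖ ^ 2 := by
        rw [Finset.sum_map]; rfl
    _ ≤ ∑ j : Fin m, ‖v j‖ ^ 2 := by
        apply Finset.sum_le_sum_of_subset_of_nonneg (Finset.subset_univ _)
        intro j _ _; positivity

def coordCLM {k m : ℕ} (σ : Fin k ↪ Fin m) : E m →L[ℝ] E k :=
  LinearMap.mkContinuous
    { toFun := fun v => coordFun σ v
      map_add' := fun a b => rfl
      map_smul' := fun c a => rfl }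
    1 (fun v => by rw [one_mul]; exact coord_norm_le σ v)

@[simp] lemma coordCLM_apply {k m : ℕ} (σ : Fin k ↪ Fin m) (v : E m) (i : Fin k) :
    coordCLM σ v i = v (σ i) := rfl

lemma coordCLM_norm_apply_le {k m : ℕ} (σ : Fin k ↪ Fin m) (v : E m) :
    ‖coordCLM σ v‖ ≤ ‖v‖ := coord_norm_le σ v

/-- Every nonzero simple `n`-covector on `ℝᵐ` is `‖α‖` times the determinant of coordinates
with respect to `n` orthonormal vectors. -/
lemma exists_onb_rep {n m : ℕ} (hn : 0 < n) (hnm : n ≤ m)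
    (α : ContinuousMultilinearMap ℝ (fun _ : Fin n => E m) ℝ) (hα : α ≠ 0)
    (θv : Fin n → (E m →L[ℝ] ℝ))
    (hrep : ∀ v, α v = (Matrix.of fun i j => θv i (v j)).det) :
    ∃ B : OrthonormalBasis (Fin m) ℝ (E m),
      ∀ v : Fin n → E m,
        α v = ‖α‖ * (Matrix.of fun i j => (⟪B (Fin.castLE hnm i), v j⟫ : ℝ)).det := by
  classical
  haveI : WellFoundedLT (Fin n) := inferInstance
  -- Riesz representatives
  set b : Fin n → E m := fun i => (InnerProductSpace.toDual ℝ (E m)).symm (θv i) with hb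
  have hbv : ∀ i (w : E m), ⟪b i, w⟫ = θv i w := fun i w =>
    InnerProductSpace.toDual_symm_apply
  have hrep' : ∀ v, α v = (Matrix.of fun i j => (⟪b i, v j⟫ : ℝ)).det := by
    intro v; rw [hrep v]; congr 1; ext i j; exact (hbv i (v j)).symm
  -- linear independence
  have hbind : LinearIndependent ℝ b := by
    by_contra hdep
    rw [Fintype.not_linearIndependent_iff] at hdep
    obtain ⟨g, hg0, i0, hgi0⟩ := hdep
    have hdet : ∀ v : Fin n → E m, (Matrix.of fun i j => (⟪b i, v j⟫ : ℝ)).det = 0 := by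
      intro v
      have : ∃ w, w ≠ 0 ∧ (Matrix.transpose (Matrix.of fun i j => (⟪b i, v j⟫ : ℝ))).mulVec w = 0 := by
        refine ⟨g, ?_, ?_⟩
        · intro h; exact hgi0 (by rw [h]; rfl)
        · funext j
          simp only [Matrix.mulVec, dotProduct, Matrix.transpose_apply, Matrix.of_apply]
          have : ∀ i : Fin n, (⟪b i, v j⟫ : ℝ) * g i = ⟪g i • b i, v j⟫ := by
            intro i; rw [real_inner_smul_left]; ring
          calc ∑ i, (⟪b i, v j⟫ : ℝ) * g i = ∑ i, (⟪g i • b i, v j⟫ : ℝ) := by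
                exact Finset.sum_congr rfl fun i _ => this i
            _ = ⟪∑ i, g i • b i, v j⟫ := (sum_inner Finset.univ (fun i => g i • b i) (v j)).symm
            _ = 0 := by rw [hg0, inner_zero_left]
      obtain ⟨w, hw, hmw⟩ := this
      have := (Matrix.exists_mulVec_eq_zero_iff).mp ⟨w, hw, hmw⟩
      rwa [Matrix.det_transpose] at this
    apply hα
    ext v
    rw [hrep' v, hdet v]; rfl
  -- Gram-Schmidt
  set u : Fin n → E m := InnerProductSpace.gramSchmidtNormed ℝ b with hu
  have huon : Orthonormal ℝ u := InnerProductSpace.gramSchmidtNormed_orthonormal hbind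
  have hspan : ∀ i, b i ∈ Submodule.span ℝ (Set.range u) := by
    intro i
    have h1 : Submodule.span ℝ (Set.range u) = Submodule.span ℝ (Set.range b) := by
      rw [hu, InnerProductSpace.span_gramSchmidtNormed_range, InnerProductSpace.span_gramSchmidt]
    rw [h1]
    exact Submodule.subset_span ⟨i, rfl⟩
  -- coefficients
  set C : Matrix (Fin n) (Fin n) ℝ := Matrix.of fun i k => (⟪u k, b i⟫ : ℝ) with hC
  have hbu : ∀ i, b i = ∑ k, C i k • u k := by
    intro i
    obtain ⟨g, hg⟩ := (Submodule.mem_span_range_iff_exists_fun ℝ).mp (hspan i)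
    have : ∀ k, C i k = g k := by
      intro k
      have : (⟪u k, b i⟫ : ℝ) = g k := by
        rw [← hg, huon.inner_right_fintype]
      simpa [hC] using this
    rw [← hg]
    exact Finset.sum_congr rfl fun k _ => by rw [this k]
  have hfact : ∀ v : Fin n → E m,
      (Matrix.of fun i j => (⟪b i, v j⟫ : ℝ)) = C * (Matrix.of fun k j => (⟪u k, v j⟫ : ℝ)) := by
    intro v; ext i j
    rw [Matrix.mul_apply]
    simp only [Matrix.of_apply]
    rw [hbu i, sum_inner]
    exact Finset.sum_congr rfl fun k _ => by rw [real_inner_smul_left]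
  set s : ℝ := C.det with hs
  have hrep'' : ∀ v, α v = s * (Matrix.of fun k j => (⟪u k, v j⟫ : ℝ)).det := by
    intro v; rw [hrep' v, hfact v, Matrix.det_mul]
  have hsne : s ≠ 0 := by
    intro h0
    apply hα
    ext v
    rw [hrep'' v, h0, zero_mul]; rfl
  -- sign adjustment
  set f0 : Fin n := ⟨0, hn⟩ with hf0
  set sgn : ℝ := if s < 0 then (-1 : ℝ) else 1 with hsgn
  have hsgn_sq : sgn * sgn = 1 := by rw [hsgn]; split <;> norm_num
  have hs_abs : s = |s| * sgn := by
    rw [hsgn]; split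
    · rename_i h; rw [abs_of_neg h]; ring
    · rename_i h; rw [abs_of_nonneg (not_lt.mp h)]; ring
  set e : Fin n → E m := fun k => (if k = f0 then sgn else 1) • u k with he
  have heon : Orthonormal ℝ e := by
    rw [orthonormal_iff_ite]
    intro i j
    have h := orthonormal_iff_ite.mp huon i j
    simp only [he, real_inner_smul_left, real_inner_smul_right, h]
    by_cases hij : i = j
    · subst hij
      by_cases h0 : i = f0 <;> simp [h0, hsgn_sq, mul_assoc]
    · simp [hij]
  have hedet : ∀ v : Fin n → E m,
      (Matrix.of fun k j => (⟪e k, v j⟫ : ℝ)).det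
        = sgn * (Matrix.of fun k j => (⟪u k, v j⟫ : ℝ)).det := by
    intro v
    set G : Matrix (Fin n) (Fin n) ℝ := Matrix.of fun k j => (⟪u k, v j⟫ : ℝ) with hG
    have hEG : (Matrix.of fun k j => (⟪e k, v j⟫ : ℝ)) = G.updateRow f0 (sgn • G f0) := by
      ext k j
      rw [Matrix.updateRow_apply]
      by_cases hk : k = f0
      · subst hk
        simp only [he, hG, Matrix.of_apply, eq_self_iff_true, if_true, Pi.smul_apply, smul_eq_mul]
        rw [real_inner_smul_left]
      · simp only [he, hG, Matrix.of_apply, if_neg hk, one_smul]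
    rw [hEG, Matrix.det_updateRow_smul, Matrix.updateRow_eq_self]
  set c : ℝ := |s| with hc
  have hcpos : 0 < c := abs_pos.mpr hsne
  have hrepe : ∀ v, α v = c * (Matrix.of fun k j => (⟪e k, v j⟫ : ℝ)).det := by
    intro v
    rw [hrep'' v, hedet v, hs_abs]
    ring
  -- extend to an orthonormal basis
  have hcard : Module.finrank ℝ (E m) = Fintype.card (Fin m) := by
    rw [Fintype.card_fin]; exact finrank_euclideanSpace_fin
  set vext : Fin m → E m := fun i => if h : (i : ℕ) < n then e ⟨i, h⟩ else 0 with hvext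
  set S : Set (Fin m) := Set.range (Fin.castLE hnm) with hS
  have hSlt : ∀ i : S, ((i : Fin m) : ℕ) < n := by rintro ⟨i, j, rfl⟩; exact j.isLt
  have hrestrict : Orthonormal ℝ (S.restrict vext) := by
    have hcomp : S.restrict vext = e ∘ (fun i : S => (⟨((i : Fin m) : ℕ), hSlt i⟩ : Fin n)) := by
      funext i
      have h := hSlt i
      simp only [Set.restrict_apply, hvext, Function.comp_apply, dif_pos h]
      show (if h : ((i : Fin m) : ℕ) < n then e ⟨(i : Fin m), h⟩ else 0) = _
      rw [dif_pos h]
    rw [hcomp]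
    exact heon.comp _ (fun a b hab => by
      apply Subtype.ext; apply Fin.ext
      simpa using congrArg Fin.val hab)
  obtain ⟨B, hB⟩ := hrestrict.exists_orthonormalBasis_extension_of_card_eq hcard
  have hBe : ∀ k : Fin n, B (Fin.castLE hnm k) = e k := by
    intro k
    have hmem : (Fin.castLE hnm k) ∈ S := ⟨k, rfl⟩
    rw [hB _ hmem, hvext]
    have hlt : ((Fin.castLE hnm k : Fin m) : ℕ) < n := k.isLt
    simp only [dif_pos hlt]
    congr 1
  -- Hadamard estimate
  set σ : Fin n ↪ Fin m := Fin.castLEEmb hnm with hσ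
  haveI : Fact (Module.finrank ℝ (E n) = n) := ⟨finrank_euclideanSpace_fin⟩
  have hHad : ∀ v : Fin n → E m,
      |(Matrix.of fun k j => (⟪e k, v j⟫ : ℝ)).det| ≤ ∏ j, ‖v j‖ := by
    intro v
    set w : Fin n → E n := fun j => coordFun σ (B.repr (v j)) with hw
    have hwv : ∀ k j, (⟪e k, v j⟫ : ℝ) = w j k := by
      intro k j
      rw [← hBe k, ← OrthonormalBasis.repr_apply_apply]
      rfl
    set bE := (EuclideanSpace.basisFun (Fin n) ℝ).toBasis with hbE
    have hdet : (Matrix.of fun k j => (⟪e k, v j⟫ : ℝ)).det = bE.det w := by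
      rw [Module.Basis.det_apply]
      congr 1
      ext k j
      rw [Module.Basis.toMatrix_apply, Matrix.of_apply, hwv k j, hbE,
        OrthonormalBasis.coe_toBasis_repr_apply, EuclideanSpace.basisFun_repr]
    set o := bE.orientation with ho
    calc |(Matrix.of fun k j => (⟪e k, v j⟫ : ℝ)).det| = |o.volumeForm w| := by
          rw [hdet, o.volumeForm_robust' (EuclideanSpace.basisFun (Fin n) ℝ) w]
      _ ≤ ∏ j, ‖w j‖ := o.abs_volumeForm_apply_le w
      _ ≤ ∏ j, ‖v j‖ := by
          apply Finset.prod_le_prod (fun j _ => norm_nonneg _)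
          intro j _
          calc ‖w j‖ ≤ ‖B.repr (v j)‖ := coord_norm_le σ (B.repr (v j))
            _ = ‖v j‖ := B.repr.norm_map (v j)
  have hnorm : ‖α‖ = c := by
    apply le_antisymm
    · apply ContinuousMultilinearMap.opNorm_le_bound hcpos.le
      intro v
      rw [hrepe v, Real.norm_eq_abs, abs_mul, abs_of_pos hcpos]
      exact mul_le_mul_of_nonneg_left (hHad v) hcpos.le
    · have h1 : α e = c := by
        rw [hrepe e]
        have h2 : (Matrix.of fun k j => (⟪e k, e j⟫ : ℝ)) = 1 := by
          ext k j
          rw [Matrix.of_apply, orthonormal_iff_ite.mp heon, Matrix.one_apply]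
        rw [h2, Matrix.det_one, mul_one]
      have h3 := α.le_opNorm e
      rw [h1, Real.norm_eq_abs, abs_of_pos hcpos] at h3
      calc c ≤ ‖α‖ * ∏ j : Fin n, ‖e j‖ := h3
        _ = ‖α‖ := by
            have : ∀ j : Fin n, ‖e j‖ = 1 := heon.1
            simp [this]
  refine ⟨B, fun v => ?_⟩
  rw [hrepe v, hnorm]
  congr 2
  ext i j
  rw [Matrix.of_apply, Matrix.of_apply, hBe i]


/-- Perturbation bound for `hodgePair` in the form variable. -/
lemma abs_hodgePair_sub_le {n m : ℕ}
    (β γ : ContinuousMultilinearMap ℝ (fun _ : Fin n => E m) ℝ) (A : E n →L[ℝ] E m) :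
    |hodgePair β A - hodgePair γ A| ≤ ‖β - γ‖ * ‖A‖ ^ n := by
  have h1 : hodgePair β A - hodgePair γ A = (β - γ) (fun i => A (stdb i)) := by
    rw [ContinuousMultilinearMap.sub_apply]; rfl
  rw [h1, ← Real.norm_eq_abs]
  calc ‖(β - γ) (fun i => A (stdb i))‖ ≤ ‖β - γ‖ * ∏ i : Fin n, ‖A (stdb i)‖ :=
        (β - γ).le_opNorm _
    _ ≤ ‖β - γ‖ * ‖A‖ ^ n := by
        apply mul_le_mul_of_nonneg_left _ (norm_nonneg _)
        calc ∏ i : Fin n, ‖A (stdb i)‖ ≤ ∏ _i : Fin n, ‖A‖ := by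
              apply Finset.prod_le_prod (fun i _ => norm_nonneg _)
              intro i _
              calc ‖A (stdb i)‖ ≤ ‖A‖ * ‖stdb i‖ := A.le_opNorm _
                _ = ‖A‖ := by rw [norm_stdb, mul_one]
          _ = ‖A‖ ^ n := by rw [Finset.prod_const, Finset.card_univ, Fintype.card_fin]

/-- The key determinant identity: the hodge pairing against the covector `c·det⟪B∘castLE, ·⟫`
is `c` times the Jacobian of the projected map. -/
lemma hodgePair_eq_clmDet {n m : ℕ} (hnm : n ≤ m)
    (α : ContinuousMultilinearMap ℝ (fun _ : Fin n => E m) ℝ)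
    (B : OrthonormalBasis (Fin m) ℝ (E m)) (c : ℝ)
    (hrep : ∀ v : Fin n → E m,
      α v = c * (Matrix.of fun i j => (⟪B (Fin.castLE hnm i), v j⟫ : ℝ)).det)
    (A : E n →L[ℝ] E m) :
    hodgePair α A = c * clmDet (((coordCLM (Fin.castLEEmb hnm)).comp
      B.repr.toLinearIsometry.toContinuousLinearMap).comp A) := by
  rw [hodgePair, hrep]
  congr 1
  set T := ((coordCLM (Fin.castLEEmb hnm)).comp
      B.repr.toLinearIsometry.toContinuousLinearMap).comp A with hT
  rw [clmDet, ← LinearMap.det_toMatrix (EuclideanSpace.basisFun (Fin n) ℝ).toBasis]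
  congr 1
  ext i j
  rw [LinearMap.toMatrix_apply, Matrix.of_apply]
  have h1 : (EuclideanSpace.basisFun (Fin n) ℝ).toBasis j = stdb j := by
    rw [OrthonormalBasis.coe_toBasis, EuclideanSpace.basisFun_apply]; rfl
  have h2 : ∀ w : E n, (EuclideanSpace.basisFun (Fin n) ℝ).toBasis.repr w i = w i :=
    fun w => rfl
  rw [h1, h2]
  show (⟪B (Fin.castLE hnm i), A (stdb j)⟫ : ℝ) = (T (stdb j)) i
  rw [hT]
  show (⟪B (Fin.castLE hnm i), A (stdb j)⟫ : ℝ) = B.repr (A (stdb j)) (Fin.castLE hnm i)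
  rw [OrthonormalBasis.repr_apply_apply]



/-- The elementary arithmetic at the heart of the proof. -/
lemma key_arith {c δ K K' ε N P J : ℝ} (hc : 0 < c) (hK : 1 ≤ K) (hK' : K < K') (hε : 0 < ε)
    (hδ0 : 0 < δ) (hδ1 : δ ≤ c / 2) (hδ2 : δ ≤ c * (K' - K) / (K' * (1 + K)))
    (hδ3 : δ ≤ c * ε / ((1 + ε) * 2 * K))
    (hN : 0 ≤ N) (hP1 : (c - δ) * N ≤ K * P) (hJP : |c * J - P| ≤ δ * N) :
    N ≤ K' * J ∧ P / ((1 + ε) * K') ≤ c * J ∧ c * J ≤ (1 + ε) * K * P := by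
  have hKpos : (0 : ℝ) < K := lt_of_lt_of_le one_pos hK
  have hK'pos : (0 : ℝ) < K' := lt_trans hKpos hK'
  have hK'1 : (1 : ℝ) ≤ K' := le_of_lt (lt_of_le_of_lt hK hK')
  have hδc : δ < c := lt_of_le_of_lt hδ1 (by linarith)
  have hcd : 0 < c - δ := by linarith
  have hP0 : 0 ≤ P := by nlinarith
  have habs := abs_le.mp hJP
  have hlow : P - δ * N ≤ c * J := by linarith [habs.1]
  have hhigh : c * J ≤ P + δ * N := by linarith [habs.2]
  -- δ * K ≤ (ε/(1+ε)) * (c - δ) in product form: δ*K*(1+ε) ≤ ε*(c-δ)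
  have hkey : δ * K * (1 + ε) ≤ ε * (c - δ) := by
    have h2 : δ * ((1 + ε) * 2 * K) ≤ c * ε := by
      rw [← le_div_iff₀ (by positivity)]
      exact hδ3
    nlinarith
  -- δ * N * (1+ε) ≤ ε * P : multiply hP1 by δ(1+ε)/(c-δ)… do via nlinarith
  have hkey2 : δ * N * (1 + ε) ≤ ε * P := by
    have h3 : δ * ((c - δ) * N) ≤ δ * (K * P) := mul_le_mul_of_nonneg_left hP1 hδ0.le
    nlinarith [mul_le_mul_of_nonneg_right hkey (show 0 ≤ P from hP0),
      mul_le_mul_of_nonneg_right h3 (show (0:ℝ) ≤ 1 + ε by linarith)]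
  refine ⟨?_, ?_, ?_⟩
  · -- N ≤ K' J
    have h4 : δ * (K' * (1 + K)) ≤ c * (K' - K) := by
      rw [← le_div_iff₀ (by positivity)]
      exact hδ2
    -- c*J ≥ ((c - δ - δK)/K) N and c - δ(1+K) ≥ cK/K'
    have h5 : (c - δ - δ * K) * N ≤ K * (c * J) := by nlinarith
    have h6 : c * K / K' ≤ c - δ - δ * K := by
      rw [div_le_iff₀ hK'pos] at *
      nlinarith
    have h7 : (c * K / K') * N ≤ K * (c * J) := le_trans (mul_le_mul_of_nonneg_right h6 hN) h5
    rw [div_mul_eq_mul_div, div_le_iff₀ hK'pos] at h7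
    have h8 : c * N ≤ c * (K' * J) := by nlinarith
    exact le_of_mul_le_mul_left h8 hc
  · -- P/((1+ε)K') ≤ cJ
    rw [div_le_iff₀ (by positivity)]
    have h1ε : (0:ℝ) ≤ 1 + ε := by linarith
    have hA := mul_le_mul_of_nonneg_left hlow h1ε
    have h9 : P ≤ (1 + ε) * (c * J) := by linarith [hA, hkey2]
    have hcJ0 : 0 ≤ c * J := by
      by_contra hneg
      push_neg at hneg
      have := mul_neg_of_pos_of_neg (show (0:ℝ) < 1 + ε by linarith) hneg
      linarith
    have h10 : (1 + ε) * (c * J) ≤ c * J * ((1 + ε) * K') := by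
      have hh := mul_nonneg (mul_nonneg h1ε hcJ0) (sub_nonneg.mpr hK'1)
      linarith [hh]
    linarith
  · -- cJ ≤ (1+ε)KP
    have hδN : 0 ≤ δ * N := mul_nonneg hδ0.le hN
    have h11 : δ * N ≤ ε * P := by linarith [hkey2, mul_nonneg hε.le hδN]
    have h12 : c * J ≤ (1 + ε) * P := by linarith
    have hh := mul_nonneg (mul_nonneg (show (0:ℝ) ≤ 1 + ε by linarith) hP0)
      (sub_nonneg.mpr hK)
    linarith [hh]

lemma locallyIntegrableOn_clm_comp {n : ℕ} {F G : Type*} [NormedAddCommGroup F] [NormedSpace ℝ F]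
    [NormedAddCommGroup G] [NormedSpace ℝ G] {Ω D : Set (E n)} (hDΩ : D ⊆ Ω)
    {g : E n → F} (hg : LocallyIntegrableOn g Ω volume) (T : F →L[ℝ] G) :
    LocallyIntegrableOn (fun z => T (g z)) D volume := by
  intro z hz
  obtain ⟨s, hs, hint⟩ := hg z (hDΩ hz)
  exact ⟨s, nhdsWithin_mono z hDΩ hs, T.integrable_comp hint⟩

/-- Cut-off integrals over `D` and `Ω` agree, and everything is integrable. -/
lemma cutoff_integral {n : ℕ} {F : Type*} [NormedAddCommGroup F] [NormedSpace ℝ F]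
    {Ω D K : Set (E n)} (hDΩ : D ⊆ Ω) (hK : IsCompact K) (hKD : K ⊆ D)
    {ψ : E n → ℝ} (hψ : Continuous ψ) (hψ0 : ∀ z ∉ K, ψ z = 0)
    {g : E n → F} (hg : LocallyIntegrableOn g Ω volume) :
    IntegrableOn (fun z => ψ z • g z) D volume ∧
      (∫ z in D, ψ z • g z) = ∫ z in Ω, ψ z • g z := by
  have hKΩ : K ⊆ Ω := hKD.trans hDΩ
  have hgK : IntegrableOn g K volume := hg.integrableOn_compact_subset hKΩ hK
  have hsupp : Function.support ψ ⊆ K := Function.support_subset_iff'.2 hψ0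
  have hψcs : HasCompactSupport ψ :=
    HasCompactSupport.intro hK hψ0
  obtain ⟨C, hC⟩ := hψcs.exists_bound_of_continuous hψ
  have h0 : ∀ z ∉ K, ψ z • g z = 0 := fun z hz => by rw [hψ0 z hz, zero_smul]
  have hmK : IntegrableOn (fun z => ψ z • g z) K volume := by
    apply Integrable.mono (hgK.norm.const_mul C) (hψ.aestronglyMeasurable.smul hgK.1)
    filter_upwards with z
    show ‖ψ z • g z‖ ≤ _
    rw [norm_smul]
    have h1 : ‖ψ z‖ * ‖g z‖ ≤ C * ‖g z‖ :=
      mul_le_mul_of_nonneg_right (hC z) (norm_nonneg _)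
    calc ‖ψ z‖ * ‖g z‖ ≤ C * ‖g z‖ := h1
      _ ≤ ‖C * ‖g z‖‖ := le_abs_self _
  have hind : (fun z => ψ z • g z) = K.indicator (fun z => ψ z • g z) :=
    (Set.indicator_eq_self.2 (Function.support_subset_iff'.2 h0)).symm
  have hintS : ∀ S : Set (E n), K ⊆ S → IntegrableOn (fun z => ψ z • g z) S volume := by
    intro S hKS
    rw [hind, IntegrableOn, integrable_indicator_iff hK.measurableSet, IntegrableOn,
      Measure.restrict_restrict hK.measurableSet, Set.inter_eq_self_of_subset_left hKS]
    exact hmK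
  refine ⟨hintS D hKD, ?_⟩
  rw [setIntegral_eq_integral_of_forall_compl_eq_zero (fun z hz => h0 z (fun hzK => hz (hKD hzK))),
    setIntegral_eq_integral_of_forall_compl_eq_zero (fun z hz => h0 z (fun hzK => hz (hKΩ hzK)))]

/-- Weak derivatives transfer through continuous linear maps and restriction of the domain. -/
lemma IsWeakDerivOn.clm_comp {n k : ℕ} {F : Type*} [NormedAddCommGroup F] [NormedSpace ℝ F] [CompleteSpace F]
    {Ω D : Set (E n)} (hDΩ : D ⊆ Ω) {f : E n → F} {f' : E n → E n →L[ℝ] F}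
    (hw : IsWeakDerivOn Ω f f') (T : F →L[ℝ] E k) :
    IsWeakDerivOn D (fun z => T (f z)) (fun z => T.comp (f' z)) := by
  obtain ⟨hfli, hf'li, hid⟩ := hw
  refine ⟨locallyIntegrableOn_clm_comp hDΩ hfli T,
    locallyIntegrableOn_clm_comp hDΩ hf'li (ContinuousLinearMap.compL ℝ (E n) F (E k) T), ?_⟩
  intro φ hφ hφc hφD v
  have hK : IsCompact (tsupport φ) := hφc
  have hKD : tsupport φ ⊆ D := hφD
  -- derivative-side cutoff
  have hψ1 : Continuous fun z => fderiv ℝ φ z v :=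
    ((hφ.continuous_fderiv (by simp)).clm_apply continuous_const)
  have hψ10 : ∀ z ∉ tsupport φ, fderiv ℝ φ z v = 0 := by
    intro z hz
    have hz' : fderiv ℝ φ z = 0 := by
      by_contra hne
      exact hz (support_fderiv_subset ℝ hne)
    rw [hz']; rfl
  obtain ⟨hIntD1, hEq1⟩ := cutoff_integral hDΩ hK hKD hψ1 hψ10 hfli
  have hψ20 : ∀ z ∉ tsupport φ, φ z = 0 := fun z hz => image_eq_zero_of_notMem_tsupport hz
  have hg2 : LocallyIntegrableOn (fun z => f' z v) Ω volume :=
    locallyIntegrableOn_clm_comp (subset_refl Ω) hf'li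
      ((ContinuousLinearMap.apply ℝ F) v)
  obtain ⟨hIntD2, hEq2⟩ := cutoff_integral hDΩ hK hKD hφ.continuous hψ20 hg2
  calc (∫ z in D, fderiv ℝ φ z v • T (f z))
      = ∫ z in D, T (fderiv ℝ φ z v • f z) := by simp only [ContinuousLinearMap.map_smul]
    _ = T (∫ z in D, fderiv ℝ φ z v • f z) := T.integral_comp_comm hIntD1
    _ = T (∫ z in Ω, fderiv ℝ φ z v • f z) := by rw [hEq1]
    _ = T (-∫ z in Ω, φ z • f' z v) := by rw [hid φ hφ hφc (hφD.trans hDΩ) v]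
    _ = -T (∫ z in Ω, φ z • f' z v) := by rw [map_neg]
    _ = -T (∫ z in D, φ z • f' z v) := by rw [hEq2]
    _ = -∫ z in D, T (φ z • f' z v) := by rw [T.integral_comp_comm hIntD2]
    _ = -∫ z in D, φ z • (T.comp (f' z)) v := by simp only [ContinuousLinearMap.map_smul]; rfl


lemma integrableOn_pow_comp {n m k : ℕ} {Ω : Set (E n)}
    {f' : E n → E n →L[ℝ] E m} (hli : LocallyIntegrableOn f' Ω volume)
    (hcpt : ∀ C : Set (E n), C ⊆ Ω → IsCompact C →
      IntegrableOn (fun z => ‖f' z‖ ^ (n : ℝ)) C volume)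
    (T : E m →L[ℝ] E k) (hT : ∀ w, ‖T w‖ ≤ ‖w‖)
    {C : Set (E n)} (hCΩ : C ⊆ Ω) (hC : IsCompact C) :
    IntegrableOn (fun z => ‖T.comp (f' z)‖ ^ (n : ℝ)) C volume := by
  have hint := hcpt C hCΩ hC
  have hTnorm : ∀ A : E n →L[ℝ] E m, ‖T.comp A‖ ≤ ‖A‖ := fun A =>
    ContinuousLinearMap.opNorm_le_bound _ (norm_nonneg A)
      (fun u => le_trans (hT _) (A.le_opNorm u))
  have hmeas : AEStronglyMeasurable (fun z => T.comp (f' z)) (volume.restrict C) := by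
    have h1 : AEStronglyMeasurable f' (volume.restrict C) :=
      (hli.integrableOn_compact_subset hCΩ hC).aestronglyMeasurable
    exact (ContinuousLinearMap.compL ℝ (E n) (E m) (E k) T).continuous.comp_aestronglyMeasurable h1
  apply Integrable.mono hint
  · have hrw : (fun z : E n => ‖T.comp (f' z)‖ ^ (n : ℝ))
        = fun z => ‖T.comp (f' z)‖ ^ (n : ℕ) := funext fun z => Real.rpow_natCast _ n
    rw [hrw]
    exact (continuous_pow n).comp_aestronglyMeasurable hmeas.norm
  · filter_upwards with z
    have e1 : ‖T.comp (f' z)‖ ^ (n : ℝ) = ‖T.comp (f' z)‖ ^ (n : ℕ) := Real.rpow_natCast _ n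
    have e2 : ‖f' z‖ ^ (n : ℝ) = ‖f' z‖ ^ (n : ℕ) := Real.rpow_natCast _ n
    rw [Real.norm_eq_abs, Real.norm_eq_abs, e1, e2,
      abs_of_nonneg (pow_nonneg (norm_nonneg _) n), abs_of_nonneg (pow_nonneg (norm_nonneg _) n)]
    exact pow_le_pow_left₀ (norm_nonneg _) (hTnorm _) n

end Helpers

/-- **Local graph structure over quasiregular maps** (Theorem 1.4).
Let `f : Ω → ℝᵐ` be a `K`-quasiregular `ω`-curve, `Ω ⊆ ℝⁿ` a domain, `n ≤ m`, `ω` a simple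
`n`-volume form, `ε > 0` and `K' > K`. Then for each `x ∈ Ω` there are a neighborhood
`D ⋐ Ω` of `x`, an isometry `L : ℝᵐ → ℝᵐ`, a `K'`-quasiregular map `f̂ : D → ℝⁿ` (with weak
derivative `g'`), and a continuous Sobolev map `h ∈ W^{1,n}(D, ℝ^{m-n})` such that
`L ∘ f|_D = (f̂, h)` (coordinatewise) and
`(⋆f^*ω)/((1+ε)K') ≤ ‖ω_{f(x)}‖ J_{f̂} ≤ (1+ε)K(⋆f^*ω)` a.e. in `D`. -/
theorem qrCurve_is_local_graph
    {n m : ℕ} (hn : 0 < n) (hnm : n ≤ m)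
    (Ω : Set (E n)) (hΩ : IsOpen Ω) (hΩconn : IsConnected Ω)
    (ω : Form n m) (hω : IsVolForm n m ω) (hsimple : IsSimpleForm ω)
    (K : ℝ) (f : E n → E m) (f' : E n → E n →L[ℝ] E m) (hf : IsQRCurveOnD K ω Ω f f')
    (ε : ℝ) (hε : 0 < ε) (K' : ℝ) (hK' : K < K')
    (x : E n) (hx : x ∈ Ω) :
    ∃ (D : Set (E n)) (L : E m ≃ᵢ E m) (fhat : E n → E n) (g' : E n → E n →L[ℝ] E n)
      (h : E n → E (m - n)) (h' : E n → E n →L[ℝ] E (m - n)),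
      x ∈ D ∧ CptContained D Ω ∧
      IsQRMapOnD K' D fhat g' ∧
      ContinuousOn h D ∧ MemW1pOn (n : ℝ) D h h' ∧
      (∀ z ∈ D, (∀ i : Fin n, L (f z) (Fin.castLE hnm i) = fhat z i) ∧
        (∀ i : Fin (m - n), L (f z) (⟨n + (i : ℕ), by omega⟩ : Fin m) = h z i)) ∧
      (∀ᵐ z ∂volume.restrict D,
        hodgePair (ω (f z)) (f' z) / ((1 + ε) * K') ≤ ‖ω (f x)‖ * clmDet (g' z) ∧
          ‖ω (f x)‖ * clmDet (g' z) ≤ (1 + ε) * K * hodgePair (ω (f z)) (f' z)) := by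
  classical
  obtain ⟨hK1, hfc, hfW, hdist⟩ := hf
  obtain ⟨θ, hθs, hθrep⟩ := hsimple
  have hα0 : ω (f x) ≠ 0 := hω.2.2.2 (f x)
  obtain ⟨B, hBrep⟩ := exists_onb_rep hn hnm (ω (f x)) hα0 (fun i => θ i (f x))
      (fun v => hθrep (f x) v)
  set c : ℝ := ‖ω (f x)‖ with hc
  have hcpos : 0 < c := norm_pos_iff.mpr hα0
  have hKpos : (0 : ℝ) < K := lt_of_lt_of_le one_pos hK1
  have hK'pos : (0 : ℝ) < K' := lt_trans hKpos hK'
  -- the two coordinate projections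
  set σ2 : Fin (m - n) ↪ Fin m := ⟨fun i => ⟨n + (i : ℕ), by omega⟩, by
    intro a b hab
    have h1 : n + (a : ℕ) = n + (b : ℕ) := congrArg Fin.val hab
    exact Fin.ext (by omega)⟩ with hσ2
  set RB : E m →L[ℝ] E m := B.repr.toLinearIsometry.toContinuousLinearMap with hRB
  set Q : E m →L[ℝ] E n := (coordCLM (Fin.castLEEmb hnm)).comp RB with hQdef
  set R : E m →L[ℝ] E (m - n) := (coordCLM σ2).comp RB with hRdef
  have hQle : ∀ w : E m, ‖Q w‖ ≤ ‖w‖ := fun w => by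
    calc ‖Q w‖ = ‖coordCLM (Fin.castLEEmb hnm) (B.repr w)‖ := rfl
      _ ≤ ‖B.repr w‖ := coordCLM_norm_apply_le _ _
      _ = ‖w‖ := B.repr.norm_map w
  have hRle : ∀ w : E m, ‖R w‖ ≤ ‖w‖ := fun w => by
    calc ‖R w‖ = ‖coordCLM σ2 (B.repr w)‖ := rfl
      _ ≤ ‖B.repr w‖ := coordCLM_norm_apply_le _ _
      _ = ‖w‖ := B.repr.norm_map w
  have hdetid : ∀ A : E n →L[ℝ] E m, hodgePair (ω (f x)) A = c * clmDet (Q.comp A) :=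
    fun A => hodgePair_eq_clmDet hnm (ω (f x)) B c hBrep A
  -- choice of δ
  set δ : ℝ := min (c / 2) (min (c * (K' - K) / (K' * (1 + K))) (c * ε / ((1 + ε) * 2 * K)))
    with hδdef
  have hδpos : 0 < δ := by
    apply lt_min (by positivity)
    apply lt_min
    · exact div_pos (mul_pos hcpos (by linarith)) (mul_pos hK'pos (by linarith))
    · exact div_pos (mul_pos hcpos hε) (by positivity)
  -- choice of D
  have hgcont : ContinuousOn (fun z => ω (f z)) Ω := hω.2.1.continuous.comp_continuousOn hfc
  set W : Set (E n) := Ω ∩ (fun z => ω (f z)) ⁻¹' Metric.ball (ω (f x)) δ with hWdef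
  have hWopen : IsOpen W := hgcont.isOpen_inter_preimage hΩ Metric.isOpen_ball
  have hxW : x ∈ W := ⟨hx, by simp [Metric.mem_ball, hδpos]⟩
  obtain ⟨r, hrpos, hrsub⟩ : ∃ r > 0, Metric.closedBall x r ⊆ W :=
    Metric.nhds_basis_closedBall.mem_iff.mp (hWopen.mem_nhds hxW)
  set D : Set (E n) := Metric.ball x r with hDdef
  have hDW : D ⊆ W := Metric.ball_subset_closedBall.trans hrsub
  have hDΩ : D ⊆ Ω := fun z hz => (hDW hz).1
  have hDδ : ∀ z ∈ D, ‖ω (f z) - ω (f x)‖ ≤ δ := by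
    intro z hz
    have h1 := (hDW hz).2
    rw [Set.mem_preimage, Metric.mem_ball, dist_eq_norm] at h1
    linarith
  have hclosureD : closure D ⊆ Ω :=
    fun z hz => (hrsub (Metric.closure_ball_subset_closedBall hz)).1
  have hcptD : IsCompact (closure D) :=
    (isCompact_closedBall x r).of_isClosed_subset isClosed_closure Metric.closure_ball_subset_closedBall
  -- weak derivatives
  have hwQ : IsWeakDerivOn D (fun z => Q (f z)) (fun z => Q.comp (f' z)) :=
    IsWeakDerivOn.clm_comp hDΩ hfW.1 Q
  have hwR : IsWeakDerivOn D (fun z => R (f z)) (fun z => R.comp (f' z)) :=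
    IsWeakDerivOn.clm_comp hDΩ hfW.1 R
  -- a.e. estimates
  have hmeasD : MeasurableSet D := Metric.isOpen_ball.measurableSet
  have hae1 := ae_restrict_of_ae_restrict_of_subset hDΩ hdist
  have hae2 : ∀ᵐ z ∂volume.restrict D, z ∈ D := ae_restrict_mem hmeasD
  have hmain : ∀ᵐ z ∂volume.restrict D,
      (‖Q.comp (f' z)‖ ^ (n : ℕ) ≤ K' * clmDet (Q.comp (f' z))) ∧
      (hodgePair (ω (f z)) (f' z) / ((1 + ε) * K') ≤ c * clmDet (Q.comp (f' z)) ∧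
        c * clmDet (Q.comp (f' z)) ≤ (1 + ε) * K * hodgePair (ω (f z)) (f' z)) := by
    filter_upwards [hae1, hae2] with z h1 h2
    have hNn : (0 : ℝ) ≤ ‖f' z‖ ^ (n : ℕ) := pow_nonneg (norm_nonneg _) n
    have hδz := hDδ z h2
    have hβlow : c - δ ≤ ‖ω (f z)‖ := by
      have h3 : ‖ω (f x)‖ - ‖ω (f z)‖ ≤ ‖ω (f x) - ω (f z)‖ := norm_sub_norm_le _ _
      rw [norm_sub_rev] at h3
      linarith
    have hP1 : (c - δ) * ‖f' z‖ ^ (n : ℕ) ≤ K * hodgePair (ω (f z)) (f' z) :=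
      le_trans (mul_le_mul_of_nonneg_right hβlow hNn) h1
    have hJP : |c * clmDet (Q.comp (f' z)) - hodgePair (ω (f z)) (f' z)|
        ≤ δ * ‖f' z‖ ^ (n : ℕ) := by
      rw [← hdetid (f' z)]
      calc |hodgePair (ω (f x)) (f' z) - hodgePair (ω (f z)) (f' z)|
          ≤ ‖ω (f x) - ω (f z)‖ * ‖f' z‖ ^ n := abs_hodgePair_sub_le _ _ _
        _ ≤ δ * ‖f' z‖ ^ (n : ℕ) := by
            apply mul_le_mul_of_nonneg_right _ hNn
            rw [norm_sub_rev]
            exact hδz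
    have harith := key_arith hcpos hK1 hK' hε hδpos (min_le_left _ _)
      ((min_le_right _ _).trans (min_le_left _ _))
      ((min_le_right _ _).trans (min_le_right _ _)) hNn hP1 hJP
    refine ⟨?_, harith.2.1, harith.2.2⟩
    calc ‖Q.comp (f' z)‖ ^ (n : ℕ) ≤ ‖f' z‖ ^ (n : ℕ) := by
          apply pow_le_pow_left₀ (norm_nonneg _)
          exact ContinuousLinearMap.opNorm_le_bound _ (norm_nonneg _)
            (fun u => le_trans (hQle _) ((f' z).le_opNorm u))
      _ ≤ K' * clmDet (Q.comp (f' z)) := harith.1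
  -- assemble
  refine ⟨D, B.repr.toIsometryEquiv, fun z => Q (f z), fun z => Q.comp (f' z),
    fun z => R (f z), fun z => R.comp (f' z),
    Metric.mem_ball_self hrpos, ⟨Metric.isOpen_ball, hcptD, hclosureD⟩, ?_, ?_, ?_, ?_, ?_⟩
  · -- IsQRMapOnD
    refine ⟨le_of_lt (lt_of_le_of_lt hK1 hK'), Q.continuous.comp_continuousOn (hfc.mono hDΩ),
      ⟨hwQ, ?_⟩, hmain.mono fun z hz => hz.1⟩
    intro C hCD hC
    exact integrableOn_pow_comp hfW.1.2.1 hfW.2 Q hQle (hCD.trans hDΩ) hC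
  · -- ContinuousOn h
    exact R.continuous.comp_continuousOn (hfc.mono hDΩ)
  · -- MemW1pOn h
    refine ⟨hwR, ?_⟩
    exact (integrableOn_pow_comp hfW.1.2.1 hfW.2 R hRle hclosureD hcptD).mono_set
      subset_closure
  · -- coordinates
    intro z hz
    constructor
    · intro i
      rfl
    · intro i
      rfl
  · -- a.e. bounds
    exact hmain.mono fun z hz => hz.2

end QRC
end
end

section
/- Let Ω ⊂ ℝ^n be a domain, ω ∈ Ω^n(ℝ^m) an n-volume form with n ≤ m, f : Ω → ℝ^m a K-quasiregular ω-curve, x_0 ∈ Ω, and K' > K. Then there exists a neighborhood Ω' ⊂ Ω of x_0 such that the restriction f|_{Ω'} : Ω' → ℝ^m is a K'-quasiregular ω_0-curve, where ω_0 is the constant coefficient n-form with ω_0(f(x_0)) = ω(f(x_0)). -/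
open MeasureTheory Filter Topology

noncomputable section

namespace QRC

variable {X F : Type*}

lemma abs_hodgePair_le {n m : ℕ} (α : ContinuousMultilinearMap ℝ (fun _ : Fin n => E m) ℝ)
    (A : E n →L[ℝ] E m) : |hodgePair α A| ≤ ‖α‖ * ‖A‖ ^ n := by
  have h1 : ‖α fun i => A (stdb i)‖ ≤ ‖α‖ * ∏ i : Fin n, ‖A (stdb i)‖ :=
    α.le_opNorm _
  have h2 : (∏ i : Fin n, ‖A (stdb i)‖) ≤ ∏ _i : Fin n, ‖A‖ := by
    apply Finset.prod_le_prod (fun i _ => norm_nonneg _)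
    intro i _
    calc ‖A (stdb i)‖ ≤ ‖A‖ * ‖stdb i‖ := A.le_opNorm _
      _ = ‖A‖ := by simp [stdb, EuclideanSpace.norm_single]
  calc |hodgePair α A| = ‖α fun i => A (stdb i)‖ := rfl
    _ ≤ ‖α‖ * ∏ i : Fin n, ‖A (stdb i)‖ := h1
    _ ≤ ‖α‖ * ∏ _i : Fin n, ‖A‖ := mul_le_mul_of_nonneg_left h2 (norm_nonneg _)
    _ = ‖α‖ * ‖A‖ ^ n := by simp [Finset.prod_const]

lemma hodgePair_sub {n m : ℕ} (α β : ContinuousMultilinearMap ℝ (fun _ : Fin n => E m) ℝ)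
    (A : E n →L[ℝ] E m) : hodgePair (α - β) A = hodgePair α A - hodgePair β A := by
  simp [hodgePair]

/-- **Localization to a constant-coefficient volume form** (Lemma 5.2).
Let `Ω ⊆ ℝⁿ` be a domain, `ω` an `n`-volume form on `ℝᵐ`, `n ≤ m`, let `f : Ω → ℝᵐ` be a
`K`-quasiregular `ω`-curve (with weak derivative `f'`), `x₀ ∈ Ω` and `K' > K`. Then there is
a neighborhood `Ω' ⊆ Ω` of `x₀` such that `f|_{Ω'}` is a `K'`-quasiregular `ω₀`-curve, where
`ω₀` is the constant-coefficient `n`-form with `ω₀(f(x₀)) = ω(f(x₀))`. -/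
theorem qrCurve_localization_constant_form
    {n m : ℕ} (hn : 0 < n) (hnm : n ≤ m)
    (Ω : Set (E n)) (hΩ : IsOpen Ω) (hΩconn : IsConnected Ω)
    (ω : Form n m) (hω : IsVolForm n m ω)
    (K : ℝ) (f : E n → E m) (f' : E n → E n →L[ℝ] E m) (hf : IsQRCurveOnD K ω Ω f f')
    (x₀ : E n) (hx₀ : x₀ ∈ Ω) (K' : ℝ) (hK' : K < K') :
    ∃ Ω' : Set (E n), IsOpen Ω' ∧ x₀ ∈ Ω' ∧ Ω' ⊆ Ω ∧
      IsQRCurveOnD K' (fun _ => ω (f x₀)) Ω' f f' := by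
  obtain ⟨hK, hcont, ⟨⟨hloc_f, hloc_f', hweak⟩, hint⟩, hae⟩ := hf
  set ω₀ := ω (f x₀) with hω₀def
  have ha : 0 < ‖ω₀‖ := norm_pos_iff.mpr (hω.2.2.2 (f x₀))
  set a := ‖ω₀‖ with hadef
  have hK0 : (0:ℝ) < K := lt_of_lt_of_le one_pos hK
  have hK'0 : (0:ℝ) < K' := hK0.trans hK'
  set ε := a * (K' - K) / ((K + 1) * K') with hεdef
  have hεpos : 0 < ε := by
    apply div_pos (mul_pos ha (by linarith))
    positivity
  have hεid : (K + 1) * ε * K' = a * (K' - K) := by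
    rw [show (K + 1) * ε * K' = ε * ((K + 1) * K') by ring, hεdef,
      div_mul_cancel₀ _ (by positivity)]
  have hωc : Continuous ω := (hω.2.1).continuous
  have hgc : ContinuousOn (fun x => ‖ω (f x) - ω₀‖) Ω :=
    ((hωc.comp_continuousOn hcont).sub continuousOn_const).norm
  set Ω' := Ω ∩ (fun x => ‖ω (f x) - ω₀‖) ⁻¹' Set.Iio ε with hΩ'def
  have hopen : IsOpen Ω' := hgc.isOpen_inter_preimage hΩ isOpen_Iio
  have hsub : Ω' ⊆ Ω := Set.inter_subset_left
  have hx₀' : x₀ ∈ Ω' := ⟨hx₀, by simpa [hω₀def] using hεpos⟩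
  refine ⟨Ω', hopen, hx₀', hsub, hK.trans hK'.le, hcont.mono hsub,
    ⟨⟨hloc_f.mono_set hsub, hloc_f'.mono_set hsub, ?_⟩,
      fun C hC hCc => hint C (hC.trans hsub) hCc⟩, ?_⟩
  · intro φ hφ hφc hφs v
    have hnmem : ∀ x ∈ Ω \ Ω', x ∉ tsupport φ := fun x hx h => hx.2 (hφs h)
    have hsupfd : ∀ x ∈ Ω \ Ω', fderiv ℝ φ x v • f x = 0 := by
      intro x hx
      have h0 : fderiv ℝ φ x = 0 :=
        Function.notMem_support.mp (fun h => hnmem x hx (support_fderiv_subset ℝ h))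
      simp [h0]
    have hsupφ : ∀ x ∈ Ω \ Ω', φ x • f' x v = 0 := by
      intro x hx
      simp [image_eq_zero_of_notMem_tsupport (hnmem x hx)]
    rw [← setIntegral_eq_of_subset_of_forall_diff_eq_zero hΩ.measurableSet hsub hsupfd,
        ← setIntegral_eq_of_subset_of_forall_diff_eq_zero hΩ.measurableSet hsub hsupφ]
    exact hweak φ hφ hφc (hφs.trans hsub) v
  · have h1 : ∀ᵐ x ∂volume.restrict Ω',
        ‖ω (f x)‖ * ‖f' x‖ ^ (n : ℕ) ≤ K * hodgePair (ω (f x)) (f' x) :=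
      hae.filter_mono (ae_mono (Measure.restrict_mono hsub le_rfl))
    have h2 : ∀ᵐ x ∂volume.restrict Ω', x ∈ Ω' := ae_restrict_mem hopen.measurableSet
    filter_upwards [h1, h2] with x hx hxΩ'
    have hδ : ‖ω (f x) - ω₀‖ < ε := hxΩ'.2
    set δ := ‖ω (f x) - ω₀‖ with hδdef
    have hδ0 : 0 ≤ δ := norm_nonneg _
    set P := ‖f' x‖ ^ (n : ℕ) with hPdef
    have hP : 0 ≤ P := pow_nonneg (norm_nonneg _) _
    set h := hodgePair ω₀ (f' x) with hhdef
    set hX := hodgePair (ω (f x)) (f' x) with hXdef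
    have habs : a - ‖ω (f x)‖ ≤ δ := by
      have := abs_norm_sub_norm_le (ω (f x)) ω₀
      rw [abs_le] at this
      linarith [this.1]
    have hdiff : hX - h ≤ δ * P := by
      have := abs_hodgePair_le (ω (f x) - ω₀) (f' x)
      rw [hodgePair_sub, abs_le] at this
      linarith [this.2]
    have key : a * P ≤ K * h + (K + 1) * δ * P := by
      have s1 : (a - δ) * P ≤ ‖ω (f x)‖ * P :=
        mul_le_mul_of_nonneg_right (by linarith) hP
      have s2 : K * hX ≤ K * (h + δ * P) :=
        mul_le_mul_of_nonneg_left (by linarith) hK0.le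
      linarith
    have hδεP : δ * P ≤ ε * P := mul_le_mul_of_nonneg_right hδ.le hP
    show a * P ≤ K' * h
    have t1 : K' * (a * P) ≤ K' * (K * h + (K + 1) * δ * P) :=
      mul_le_mul_of_nonneg_left key hK'0.le
    have t3 : K' * (K + 1) * (δ * P) ≤ K' * (K + 1) * (ε * P) :=
      mul_le_mul_of_nonneg_left hδεP (by positivity)
    have e4 : K' * (K + 1) * (ε * P) = a * (K' - K) * P := by
      linear_combination P * hεid
    have c : K * (a * P) ≤ K * (K' * h) := by linarith
    exact le_of_mul_le_mul_left c hK0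

end QRC
end
end

section
/- For j = 1,2, let N_j be an oriented Riemannian n-manifold, ω_j ∈ Ω^n(N_j) the Riemannian volume form, f_j : M → N_j a K-quasiregular map from an oriented Riemannian n-manifold M, and π_j : N_1×N_2 → N_j the projection. Let ω = π_1^*ω_1 + π_2^*ω_2 ∈ Ω^n(N_1×N_2). Then f = (f_1,f_2) : M → N_1×N_2 is a 2^n K-quasiregular ω-curve. -/
open MeasureTheory Filter Topology

noncomputable section

namespace QRC

variable {X F : Type*}

def inlM (n : ℕ) : E n →ₗᵢ[ℝ] EuclideanSpace ℝ (Fin n ⊕ Fin n) where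
  toLinearMap :=
  { toFun := fun v => (WithLp.equiv 2 ((Fin n ⊕ Fin n) → ℝ)).symm (Sum.elim (fun i => v i) 0)
    map_add' := by intro v w; ext j; cases j <;> simp
    map_smul' := by intro c v; ext j; cases j <;> simp }
  norm_map' := by
    intro v
    simp only [LinearMap.coe_mk, AddHom.coe_mk]
    rw [EuclideanSpace.norm_eq, EuclideanSpace.norm_eq]
    congr 1
    rw [Fintype.sum_sum_type]
    simp

def inrM (n : ℕ) : E n →ₗᵢ[ℝ] EuclideanSpace ℝ (Fin n ⊕ Fin n) where
  toLinearMap :=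
  { toFun := fun v => (WithLp.equiv 2 ((Fin n ⊕ Fin n) → ℝ)).symm (Sum.elim 0 (fun i => v i))
    map_add' := by intro v w; ext j; cases j <;> simp
    map_smul' := by intro c v; ext j; cases j <;> simp }
  norm_map' := by
    intro v
    simp only [LinearMap.coe_mk, AddHom.coe_mk]
    rw [EuclideanSpace.norm_eq, EuclideanSpace.norm_eq]
    congr 1
    rw [Fintype.sum_sum_type]
    simp

@[simp] lemma inlM_apply_inl {n : ℕ} (v : E n) (i : Fin n) : inlM n v (Sum.inl i) = v i := rfl
@[simp] lemma inlM_apply_inr {n : ℕ} (v : E n) (i : Fin n) : inlM n v (Sum.inr i) = 0 := rfl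
@[simp] lemma inrM_apply_inl {n : ℕ} (v : E n) (i : Fin n) : inrM n v (Sum.inl i) = 0 := rfl
@[simp] lemma inrM_apply_inr {n : ℕ} (v : E n) (i : Fin n) : inrM n v (Sum.inr i) = v i := rfl

lemma locInt_clm {n : ℕ} {Ω : Set (E n)} {G G' : Type*} [NormedAddCommGroup G] [NormedSpace ℝ G]
    [NormedAddCommGroup G'] [NormedSpace ℝ G'] {f : E n → G}
    (hf : LocallyIntegrableOn f Ω volume) (L : G →L[ℝ] G') :
    LocallyIntegrableOn (fun x => L (f x)) Ω volume := by
  intro x hx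
  obtain ⟨s, hs, hint⟩ := hf x hx
  exact ⟨s, hs, L.integrable_comp hint⟩

lemma aux_int {n : ℕ} {Ω : Set (E n)} {G : Type*} [NormedAddCommGroup G] [NormedSpace ℝ G]
    {f : E n → G} {c : E n → ℝ}
    (hf : LocallyIntegrableOn f Ω volume) (hc : Continuous c)
    (hK : HasCompactSupport c) (hsub : tsupport c ⊆ Ω) :
    IntegrableOn (fun x => c x • f x) Ω volume := by
  have hfK : IntegrableOn f (tsupport c) volume := hf.integrableOn_compact_subset hsub hK
  have h2 : IntegrableOn (fun x => c x • f x) (tsupport c) volume :=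
    hfK.continuousOn_smul hc.continuousOn hK
  have hsupp : Function.support (fun x => c x • f x) ⊆ tsupport c := by
    intro x hx
    apply subset_tsupport
    intro hcx
    simp only [Function.mem_support] at hx
    exact hx (by simp [hcx])
  exact ((integrableOn_iff_integrable_of_support_subset hsupp).mp h2).integrableOn

lemma add_pow_le_two_pow {a b : ℝ} (ha : 0 ≤ a) (hb : 0 ≤ b) (n : ℕ) :
    (a + b) ^ n ≤ 2 ^ n * (a ^ n + b ^ n) := by
  have h1 : a + b ≤ 2 * max a b := by
    rcases le_total a b with h | h
    · rw [max_eq_right h]; linarith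
    · rw [max_eq_left h]; linarith
  calc (a + b) ^ n ≤ (2 * max a b) ^ n := pow_le_pow_left₀ (by positivity) h1 n
    _ = 2 ^ n * (max a b) ^ n := mul_pow 2 _ n
    _ ≤ 2 ^ n * (a ^ n + b ^ n) := by
        apply mul_le_mul_of_nonneg_left _ (by positivity)
        rcases le_total a b with h | h
        · rw [max_eq_right h]; exact le_add_of_nonneg_left (pow_nonneg ha n)
        · rw [max_eq_left h]; exact le_add_of_nonneg_right (pow_nonneg hb n)


set_option maxHeartbeats 1000000 in
/-- **Products of quasiregular maps are quasiregular curves** (Example in Section 1).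
Let `f₁, f₂ : Ω → ℝⁿ` be `K`-quasiregular maps on an open set `Ω ⊆ ℝⁿ` (with weak derivatives
`f₁', f₂'`). On the Riemannian product `N₁ × N₂ = ℝⁿ × ℝⁿ` (with the Euclidean product metric,
modelled as `EuclideanSpace ℝ (Fin n ⊕ Fin n)`), consider the `n`-volume form
`ω = π₁^*ω₁ + π₂^*ω₂`, which satisfies `‖ω‖ = 1` and `⋆(f₁,f₂)^*ω = J_{f₁} + J_{f₂}`.
Then `f = (f₁, f₂)` is a `2ⁿK`-quasiregular `ω`-curve: it is continuous, in `W^{1,n}_loc`,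
and satisfies `(‖ω‖∘f) ‖Df‖ⁿ ≤ 2ⁿK (J_{f₁} + J_{f₂})` a.e. in `Ω`. -/
theorem product_of_qr_maps_is_qrCurve
    {n : ℕ} (hn : 0 < n)
    (Ω : Set (E n)) (hΩ : IsOpen Ω)
    (K : ℝ) (f₁ f₂ : E n → E n) (f₁' f₂' : E n → E n →L[ℝ] E n)
    (h₁ : IsQRMapOnD K Ω f₁ f₁') (h₂ : IsQRMapOnD K Ω f₂ f₂') :
    ∃ F' : E n → E n →L[ℝ] EuclideanSpace ℝ (Fin n ⊕ Fin n),
      (∀ x (v : E n), (∀ i : Fin n, F' x v (Sum.inl i) = f₁' x v i) ∧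
        ∀ i : Fin n, F' x v (Sum.inr i) = f₂' x v i) ∧
      (1 : ℝ) ≤ 2 ^ n * K ∧
      ContinuousOn
        (fun x => ((WithLp.equiv 2 ((Fin n ⊕ Fin n) → ℝ)).symm
          (Sum.elim (fun i => f₁ x i) (fun i => f₂ x i)))) Ω ∧
      MemW1pLocOn (n : ℝ) Ω
        (fun x => ((WithLp.equiv 2 ((Fin n ⊕ Fin n) → ℝ)).symm
          (Sum.elim (fun i => f₁ x i) (fun i => f₂ x i)))) F' ∧
      ∀ᵐ x ∂volume.restrict Ω,
        1 * ‖F' x‖ ^ (n : ℕ) ≤ 2 ^ n * K * (clmDet (f₁' x) + clmDet (f₂' x)) := by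
    classical
  -- notation
  set ι₁ := (inlM n).toContinuousLinearMap with hι₁
  set ι₂ := (inrM n).toContinuousLinearMap with hι₂
  obtain ⟨hK₁, hcont₁, ⟨⟨hloc₁, hloc₁', hid₁⟩, hW₁⟩, hae₁⟩ := h₁
  obtain ⟨hK₂, hcont₂, ⟨⟨hloc₂, hloc₂', hid₂⟩, hW₂⟩, hae₂⟩ := h₂
  set F : E n → EuclideanSpace ℝ (Fin n ⊕ Fin n) :=
    fun x => ((WithLp.equiv 2 ((Fin n ⊕ Fin n) → ℝ)).symm
      (Sum.elim (fun i => f₁ x i) (fun i => f₂ x i))) with hFdef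
  set F' : E n → E n →L[ℝ] EuclideanSpace ℝ (Fin n ⊕ Fin n) :=
    fun x => ι₁.comp (f₁' x) + ι₂.comp (f₂' x) with hF'def
  have hF : ∀ x, F x = inlM n (f₁ x) + inrM n (f₂ x) := by
    intro x; ext j; cases j <;> simp [hFdef, inlM, inrM]
  have hF'v : ∀ x v, F' x v = inlM n (f₁' x v) + inrM n (f₂' x v) := fun x v => rfl
  have hnorm : ∀ x, ‖F' x‖ ≤ ‖f₁' x‖ + ‖f₂' x‖ := by
    intro x
    apply ContinuousLinearMap.opNorm_le_bound _ (by positivity)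
    intro v
    calc ‖F' x v‖ = ‖inlM n (f₁' x v) + inrM n (f₂' x v)‖ := by rw [hF'v]
      _ ≤ ‖inlM n (f₁' x v)‖ + ‖inrM n (f₂' x v)‖ := norm_add_le _ _
      _ = ‖f₁' x v‖ + ‖f₂' x v‖ := by rw [(inlM n).norm_map, (inrM n).norm_map]
      _ ≤ ‖f₁' x‖ * ‖v‖ + ‖f₂' x‖ * ‖v‖ :=
          add_le_add ((f₁' x).le_opNorm v) ((f₂' x).le_opNorm v)
      _ = (‖f₁' x‖ + ‖f₂' x‖) * ‖v‖ := by ring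
  refine ⟨F', ?_, ?_, ?_, ?_, ?_⟩
  · intro x v
    constructor <;> intro i <;>
      simp [hF'v x v]
  · have : (1:ℝ) ≤ 2 ^ n := one_le_pow₀ (by norm_num)
    calc (1:ℝ) = 1 * 1 := by ring
      _ ≤ 2 ^ n * K := mul_le_mul this hK₁ zero_le_one (by positivity)
  · -- continuity
    have : ContinuousOn (fun x => inlM n (f₁ x) + inrM n (f₂ x)) Ω :=
      ((inlM n).continuous.comp_continuousOn hcont₁).add
        ((inrM n).continuous.comp_continuousOn hcont₂)
    exact this.congr fun x _ => hF x
  · -- Sobolev membership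
    have hlocF : LocallyIntegrableOn F Ω volume := by
      have : ContinuousOn F Ω := by
        have : ContinuousOn (fun x => inlM n (f₁ x) + inrM n (f₂ x)) Ω :=
          ((inlM n).continuous.comp_continuousOn hcont₁).add
            ((inrM n).continuous.comp_continuousOn hcont₂)
        exact this.congr fun x _ => hF x
      exact this.locallyIntegrableOn hΩ.measurableSet
    have hlocF' : LocallyIntegrableOn F' Ω volume := by
      have l1 : LocallyIntegrableOn (fun x => ι₁.comp (f₁' x)) Ω volume :=
        locInt_clm hloc₁'
          (ContinuousLinearMap.compL ℝ (E n) (E n) (EuclideanSpace ℝ (Fin n ⊕ Fin n)) ι₁)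
      have l2 : LocallyIntegrableOn (fun x => ι₂.comp (f₂' x)) Ω volume :=
        locInt_clm hloc₂'
          (ContinuousLinearMap.compL ℝ (E n) (E n) (EuclideanSpace ℝ (Fin n ⊕ Fin n)) ι₂)
      intro x hx
      obtain ⟨s, hs, hi⟩ := l1 x hx
      obtain ⟨t, ht, hj⟩ := l2 x hx
      have hi' := hi.mono_set (Set.inter_subset_left (t := t))
      have hj' := hj.mono_set (Set.inter_subset_right (s := s))
      have hh := Integrable.mono' (hi'.norm.add hj'.norm)
        (hi'.aestronglyMeasurable.add hj'.aestronglyMeasurable)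
        (Eventually.of_forall fun x => norm_add_le _ _)
      exact ⟨s ∩ t, Filter.inter_mem hs ht, hh⟩
    refine ⟨⟨hlocF, hlocF', ?_⟩, ?_⟩
    · -- weak derivative identity
      intro φ hφ hφc hφsub v
      set c : E n → ℝ := fun x => fderiv ℝ φ x v with hcdef
      have hccont : Continuous c := by
        have h := (hφ.continuous_fderiv (by simp))
        exact (ContinuousLinearMap.apply ℝ ℝ v).continuous.comp h
      have hcsupp : HasCompactSupport c := by
        have h1 : HasCompactSupport (fderiv ℝ φ) := hφc.fderiv ℝ
        exact h1.comp_left (g := fun A : E n →L[ℝ] ℝ => A v) rfl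
      have hcsub : tsupport c ⊆ Ω := by
        refine subset_trans ?_ hφsub
        apply closure_minimal _ (isClosed_tsupport φ)
        intro x hx
        have : fderiv ℝ φ x ≠ 0 := by
          intro h0
          simp only [Function.mem_support, hcdef] at hx
          exact hx (by rw [h0]; rfl)
        exact support_fderiv_subset ℝ (Function.mem_support.2 this)
      -- integrabilities
      have I1 : IntegrableOn (fun x => c x • f₁ x) Ω volume :=
        aux_int hloc₁ hccont hcsupp hcsub
      have I2 : IntegrableOn (fun x => c x • f₂ x) Ω volume :=
        aux_int hloc₂ hccont hcsupp hcsub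
      have hφcont : Continuous φ := hφ.continuous
      have hφsubΩ : tsupport φ ⊆ Ω := hφsub
      have J1 : IntegrableOn (fun x => φ x • f₁' x v) Ω volume :=
        aux_int (locInt_clm hloc₁' (ContinuousLinearMap.apply ℝ (E n) v)) hφcont hφc hφsubΩ
      have J2 : IntegrableOn (fun x => φ x • f₂' x v) Ω volume :=
        aux_int (locInt_clm hloc₂' (ContinuousLinearMap.apply ℝ (E n) v)) hφcont hφc hφsubΩ
      calc (∫ x in Ω, fderiv ℝ φ x v • F x)
          = ∫ x in Ω, (inlM n (c x • f₁ x) + inrM n (c x • f₂ x)) := by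
            apply integral_congr_ae
            filter_upwards with x
            rw [hF x, smul_add, (inlM n).map_smul, (inrM n).map_smul]
        _ = (∫ x in Ω, inlM n (c x • f₁ x)) + ∫ x in Ω, inrM n (c x • f₂ x) :=
            integral_add (ι₁.integrable_comp I1 : Integrable (fun x => inlM n (c x • f₁ x)) _)
              (ι₂.integrable_comp I2 : Integrable (fun x => inrM n (c x • f₂ x)) _)
        _ = inlM n (∫ x in Ω, c x • f₁ x) + inrM n (∫ x in Ω, c x • f₂ x) := by
            rw [(inlM n).integral_comp_comm, (inrM n).integral_comp_comm]
        _ = inlM n (-∫ x in Ω, φ x • f₁' x v) + inrM n (-∫ x in Ω, φ x • f₂' x v) := by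
            rw [hid₁ φ hφ hφc hφsub v, hid₂ φ hφ hφc hφsub v]
        _ = -((∫ x in Ω, inlM n (φ x • f₁' x v)) + ∫ x in Ω, inrM n (φ x • f₂' x v)) := by
            rw [(inlM n).integral_comp_comm, (inrM n).integral_comp_comm]
            simp only [map_neg]
            abel
        _ = -∫ x in Ω, (inlM n (φ x • f₁' x v) + inrM n (φ x • f₂' x v)) := by
            have Jl : Integrable (fun x => inlM n (φ x • f₁' x v)) (volume.restrict Ω) :=
              ι₁.integrable_comp J1
            have Jr : Integrable (fun x => inrM n (φ x • f₂' x v)) (volume.restrict Ω) :=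
              ι₂.integrable_comp J2
            rw [integral_add Jl Jr]
        _ = -∫ x in Ω, φ x • F' x v := by
            congr 1
            apply integral_congr_ae
            filter_upwards with x
            rw [hF'v, smul_add, (inlM n).map_smul, (inrM n).map_smul]
    · -- integrability of ‖F'‖^n on compacts
      intro C hCΩ hCc
      have hi₁ := hW₁ C hCΩ hCc
      have hi₂ := hW₂ C hCΩ hCc
      simp_rw [Real.rpow_natCast] at hi₁ hi₂ ⊢
      have hmF' : AEStronglyMeasurable F' (volume.restrict C) :=
        (hlocF'.integrableOn_compact_subset hCΩ hCc).aestronglyMeasurable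
      refine Integrable.mono' (((hi₁.add hi₂).const_mul ((2:ℝ) ^ n)))
        (hmF'.norm.aemeasurable.pow_const n).aestronglyMeasurable ?_
      filter_upwards with x
      rw [Real.norm_eq_abs, abs_of_nonneg (pow_nonneg (norm_nonneg _) n)]
      calc ‖F' x‖ ^ n ≤ (‖f₁' x‖ + ‖f₂' x‖) ^ n :=
            pow_le_pow_left₀ (norm_nonneg _) (hnorm x) n
        _ ≤ 2 ^ n * (‖f₁' x‖ ^ n + ‖f₂' x‖ ^ n) :=
            add_pow_le_two_pow (norm_nonneg _) (norm_nonneg _) n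
  · -- distortion inequality a.e.
    have hK0 : (0:ℝ) < K := lt_of_lt_of_le one_pos hK₁
    filter_upwards [hae₁, hae₂] with x hx₁ hx₂
    have hd₁ : 0 ≤ clmDet (f₁' x) := by
      nlinarith [pow_nonneg (norm_nonneg (f₁' x)) n]
    have hd₂ : 0 ≤ clmDet (f₂' x) := by
      nlinarith [pow_nonneg (norm_nonneg (f₂' x)) n]
    rw [one_mul]
    calc ‖F' x‖ ^ n ≤ (‖f₁' x‖ + ‖f₂' x‖) ^ n :=
          pow_le_pow_left₀ (norm_nonneg _) (hnorm x) n
      _ ≤ 2 ^ n * (‖f₁' x‖ ^ n + ‖f₂' x‖ ^ n) :=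
          add_pow_le_two_pow (norm_nonneg _) (norm_nonneg _) n
      _ ≤ 2 ^ n * (K * clmDet (f₁' x) + K * clmDet (f₂' x)) := by
          apply mul_le_mul_of_nonneg_left (add_le_add hx₁ hx₂) (by positivity)
      _ = 2 ^ n * K * (clmDet (f₁' x) + clmDet (f₂' x)) := by ring

end QRC
end
end
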